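/- Let K be a field of characteristic p ≠ 2 (and if p = 3 assume j = 0), and let E : y² = x³ + r²a x + r³b over K(t) where r = t³ + at + b and y² = x³ + ax + b is an elliptic curve over K with j-invariant j. Then P = (rt, r²) is a point on E, and both P and 2P are everywhere integral, so D_P = D_{2P} = 0. -/

import Mathlib

open WeierstrassCurve WeierstrassCurve.Affine

/-- A Weierstrass model is integral at `v` if all its coefficients have nonnegative valuation. -/
def IsIntegralModel {F : Type*} [Field F] (v : AddValuation F (WithTop ℤ))
    (W : WeierstrassCurve F) : Prop :=
  0 ≤ v W.a₁ ∧ 0 ≤ v W.a₂ ∧ 0 ≤ v W.a₃ ∧ 0 ≤ v W.a₄ ∧ 0 ≤ v W.a₆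

/-- A Weierstrass model is minimal at `v` if it is integral and the valuation of its
discriminant is minimal among all integral models obtained by a change of variables. -/
def IsMinimalModel {F : Type*} [Field F] (v : AddValuation F (WithTop ℤ))
    (W : WeierstrassCurve F) : Prop :=
  IsIntegralModel v W ∧ ∀ C : VariableChange F,
    IsIntegralModel v (C • W) → v W.Δ ≤ v (C • W).Δ

/-- `HasEDSVal v W P d` says that the term of the elliptic divisibility sequence attached to the
point `P` has multiplicity `d` at the place `v`, i.e. `d = max{-(1/2) v(x_v(P)), 0}` where `x_v`
is the `x`-coordinate of `P` on a `v`-minimal Weierstrass model (under the variable change `C`,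
the point `(x, y)` has new `x`-coordinate `u⁻²(x - r)`). -/
def HasEDSVal {F : Type*} [Field F] (v : AddValuation F (WithTop ℤ)) (W : WeierstrassCurve F)
    (P : W.toAffine.Point) (d : ℕ) : Prop :=
  ∃ (C : VariableChange F) (x y : F) (h : W.toAffine.Nonsingular x y),
    P = Point.some _ _ h ∧ IsMinimalModel v (C • W) ∧
    ((-(2 * (d : ℤ)) : ℤ) : WithTop ℤ) = min (v ((C.u⁻¹ : Fˣ) ^ 2 * (x - C.r))) 0

/-- The valuation `v` of `F` is trivial on the base field `K`, i.e. `v` is a place of the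
function field `F` over `K`. -/
def TrivialOnBase (K : Type*) {F : Type*} [Field K] [Field F] [Algebra K F]
    (v : AddValuation F (WithTop ℤ)) : Prop :=
  ∀ c : K, c ≠ 0 → v (algebraMap K F c) = 0

/-- `F` is (abstractly) the function field of a smooth projective geometrically irreducible curve
over `K`: it is a finitely generated extension of transcendence degree one whose field of
constants (the algebraic closure of `K` in `F`) is `K` itself. -/
def IsFunctionFieldOver (K F : Type*) [Field K] [Field F] [Algebra K F] : Prop :=
  (∃ t : F, Transcendental K t ∧
    FiniteDimensional (IntermediateField.adjoin K {t}) F) ∧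
  ∀ a : F, IsAlgebraic K a → a ∈ (algebraMap K F).range

namespace TPIaux

open Polynomial

section General

variable {F : Type*} [Field F] (v : AddValuation F (WithTop ℤ))

lemma nsmul_coe (n : ℕ) (c : ℤ) : n • ((c : WithTop ℤ)) = ((n * c : ℤ) : WithTop ℤ) := by
  induction n with
  | zero => simp
  | succ n ih => rw [succ_nsmul, ih, ← WithTop.coe_add]; congr 1; push_cast; ring

lemma exists_int' {f : F} (hf : f ≠ 0) : ∃ c : ℤ, v f = (c : WithTop ℤ) := by
  obtain ⟨c, hc⟩ := WithTop.ne_top_iff_exists.mp ((v.ne_top_iff).mpr hf)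
  exact ⟨c, hc.symm⟩

lemma vnat (n : ℕ) : 0 ≤ v (n : F) := by
  induction n with
  | zero => simp [v.map_zero]
  | succ n ih =>
      push_cast
      exact le_trans (le_min ih (le_of_eq v.map_one.symm)) (v.map_add _ _)

lemma vmul {x y : F} (hx : 0 ≤ v x) (hy : 0 ≤ v y) : 0 ≤ v (x * y) := by
  rw [v.map_mul]; exact add_nonneg hx hy

lemma vmul_ge {x y : F} {cx cy : ℤ} (hx : (cx : WithTop ℤ) ≤ v x)
    (hy : (cy : WithTop ℤ) ≤ v y) : ((cx + cy : ℤ) : WithTop ℤ) ≤ v (x * y) := by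
  rw [v.map_mul, WithTop.coe_add]; exact add_le_add hx hy

lemma vmul_eq {x y : F} {cx cy : ℤ} (hx : v x = (cx : WithTop ℤ))
    (hy : v y = (cy : WithTop ℤ)) : v (x * y) = ((cx + cy : ℤ) : WithTop ℤ) := by
  rw [v.map_mul, hx, hy, WithTop.coe_add]

lemma vpow {x : F} (hx : 0 ≤ v x) (n : ℕ) : 0 ≤ v (x ^ n) := by
  rw [v.map_pow]; exact nsmul_nonneg hx n

lemma vpow_eq {x : F} {cx : ℤ} (hx : v x = (cx : WithTop ℤ)) (n : ℕ) :
    v (x ^ n) = ((n * cx : ℤ) : WithTop ℤ) := by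
  rw [v.map_pow, hx, nsmul_coe]

lemma vinv_eq {x : F} {cx : ℤ} (hx : v x = (cx : WithTop ℤ)) :
    v x⁻¹ = ((-cx : ℤ) : WithTop ℤ) := by
  rw [v.map_inv, hx, WithTop.LinearOrderedAddCommGroup.coe_neg]

lemma integral_invariants {W : WeierstrassCurve F} (h : IsIntegralModel v W) :
    0 ≤ v W.b₂ ∧ 0 ≤ v W.b₄ ∧ 0 ≤ v W.c₄ ∧ 0 ≤ v W.c₆ ∧ 0 ≤ v W.Δ := by
  obtain ⟨h1, h2, h3, h4, h6⟩ := h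
  have hb₂ : 0 ≤ v W.b₂ := by
    rw [b₂]
    exact v.map_le_add (vpow v h1 2) (vmul v (vnat v 4) h2)
  have hb₄ : 0 ≤ v W.b₄ := by
    rw [b₄]
    exact v.map_le_add (vmul v (vnat v 2) h4) (vmul v h1 h3)
  have hb₆ : 0 ≤ v W.b₆ := by
    rw [b₆]
    exact v.map_le_add (vpow v h3 2) (vmul v (vnat v 4) h6)
  have hb₈ : 0 ≤ v W.b₈ := by
    rw [b₈]
    refine v.map_le_sub (v.map_le_add (v.map_le_sub (v.map_le_add ?_ ?_) ?_) ?_) ?_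
    · exact vmul v (vpow v h1 2) h6
    · exact vmul v (vmul v (vnat v 4) h2) h6
    · exact vmul v (vmul v h1 h3) h4
    · exact vmul v h2 (vpow v h3 2)
    · exact vpow v h4 2
  refine ⟨hb₂, hb₄, ?_, ?_, ?_⟩
  · rw [c₄]
    exact v.map_le_sub (vpow v hb₂ 2) (vmul v (vnat v 24) hb₄)
  · rw [c₆]
    refine v.map_le_sub (v.map_le_add ?_ ?_) ?_
    · rw [v.map_neg]; exact vpow v hb₂ 3
    · exact vmul v (vmul v (vnat v 36) hb₂) hb₄
    · exact vmul v (vnat v 216) hb₆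
  · rw [WeierstrassCurve.Δ]
    refine v.map_le_add (v.map_le_sub (v.map_le_sub ?_ ?_) ?_) ?_
    · refine vmul v ?_ hb₈
      rw [v.map_neg]; exact vpow v hb₂ 2
    · exact vmul v (vnat v 8) (vpow v hb₄ 3)
    · exact vmul v (vnat v 27) (vpow v hb₆ 2)
    · exact vmul v (vmul v (vmul v (vnat v 9) hb₂) hb₄) hb₆

/-- The key minimality criterion: if every integral change of variables has `v u ≤ 0`,
then the model is minimal. -/
lemma minimal_of_u_bound {W : WeierstrassCurve F} (hint : IsIntegralModel v W)
    (hu : ∀ C : VariableChange F, IsIntegralModel v (C • W) →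
      v (C.u : F) ≤ 0) : IsMinimalModel v W := by
  refine ⟨hint, fun C hC => ?_⟩
  rw [variableChange_Δ, v.map_mul, v.map_pow, Units.val_inv_eq_inv_val, v.map_inv]
  have hune : (C.u : F) ≠ 0 := C.u.ne_zero
  obtain ⟨c, hc⟩ := exists_int' v hune
  have hcle : c ≤ 0 := by
    have := hu C hC
    rw [hc] at this
    exact_mod_cast this
  rw [hc, ← WithTop.LinearOrderedAddCommGroup.coe_neg, nsmul_coe 12 (-c)]
  have hnn : (0 : WithTop ℤ) ≤ ((12 * (-c) : ℤ) : WithTop ℤ) := by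
    exact_mod_cast (by omega : (0:ℤ) ≤ 12 * (-c))
  calc v W.Δ = 0 + v W.Δ := (zero_add _).symm
  _ ≤ _ := add_le_add_left hnn _

/-- Bounding `v u` from the valuation of a weight-`n` invariant. -/
lemma u_nonpos_aux {g e : ℤ} (hg : 0 < g) {u : Fˣ} {val : F}
    (hk : ∃ k : ℤ, v (u : F) = ((k * g : ℤ) : WithTop ℤ))
    {n : ℕ} (hn : 0 < n) (hval : v val = (e : WithTop ℤ)) (he : e < n * g)
    (hbound : 0 ≤ v (((u⁻¹ : Fˣ) : F) ^ n * val)) : v (u : F) ≤ 0 := by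
  obtain ⟨k, hkk⟩ := hk
  rw [v.map_mul, v.map_pow, Units.val_inv_eq_inv_val, v.map_inv, hkk,
    ← WithTop.LinearOrderedAddCommGroup.coe_neg, nsmul_coe, hval, ← WithTop.coe_add] at hbound
  have hb : (0 : ℤ) ≤ (n : ℤ) * -(k * g) + e := by exact_mod_cast hbound
  have hnn : (0 : ℤ) < (n : ℤ) := by exact_mod_cast hn
  have h1 : (n : ℤ) * (k * g) < (n : ℤ) * g := by linarith
  have h2 : k * g < g := lt_of_mul_lt_mul_left h1 (le_of_lt hnn)
  have h3 : k ≤ 0 := by nlinarith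
  have hkg : k * g ≤ 0 := by
    have := mul_le_mul_of_nonneg_right h3 (le_of_lt hg)
    simpa using this
  rw [hkk]
  exact_mod_cast hkg

end General

section RatFuncLemmas

variable {K : Type*} [Field K] (v : AddValuation (RatFunc K) (WithTop ℤ))
variable (hv : ∀ c : K, c ≠ 0 → v (RatFunc.C c) = 0)
include hv

lemma vC_nonneg (c : K) : 0 ≤ v (RatFunc.C c) := by
  rcases eq_or_ne c 0 with rfl | hc
  · simp [v.map_zero]
  · exact le_of_eq (hv c hc).symm

lemma vpoly_nonneg (hx : 0 ≤ v RatFunc.X) (p : K[X]) :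
    0 ≤ v (algebraMap K[X] (RatFunc K) p) := by
  induction p using Polynomial.induction_on' with
  | add p q hp hq => rw [map_add]; exact le_trans (le_min hp hq) (v.map_add _ _)
  | monomial n c =>
      rw [← Polynomial.C_mul_X_pow_eq_monomial, map_mul, map_pow, RatFunc.algebraMap_C,
        RatFunc.algebraMap_X, v.map_mul, v.map_pow]
      exact add_nonneg (vC_nonneg v hv c) (nsmul_nonneg hx n)

/-- case A: the valuation of a nonzero polynomial is `deg p • v X` when `v X < 0`. -/
lemma vpoly_deg {c : ℤ} (hX : v RatFunc.X = (c : WithTop ℤ)) (hc : c < 0)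
    {p : K[X]} (hp : p ≠ 0) :
    v (algebraMap K[X] (RatFunc K) p) = ((p.natDegree * c : ℤ) : WithTop ℤ) := by
  have H : ∀ n : ℕ, ∀ p : K[X], p ≠ 0 → p.natDegree = n →
      v (algebraMap K[X] (RatFunc K) p) = ((p.natDegree * c : ℤ) : WithTop ℤ) := by
    intro n
    induction n using Nat.strong_induction_on with
    | _ n ih =>
      intro p hp hn
      have hmon : v (algebraMap K[X] (RatFunc K)
          (Polynomial.monomial p.natDegree p.leadingCoeff))
          = ((p.natDegree * c : ℤ) : WithTop ℤ) := by
        rw [← Polynomial.C_mul_X_pow_eq_monomial, map_mul, map_pow, RatFunc.algebraMap_C,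
          RatFunc.algebraMap_X, v.map_mul, v.map_pow, hv _ (Polynomial.leadingCoeff_ne_zero.mpr hp),
          hX, nsmul_coe, zero_add]
      rcases eq_or_ne p.eraseLead 0 with he | he
      · conv_lhs => rw [← Polynomial.eraseLead_add_monomial_natDegree_leadingCoeff p, he, zero_add]
        exact hmon
      · have hn0 : p.natDegree ≠ 0 := by
          intro h0
          obtain ⟨x, rfl⟩ : ∃ x, p = Polynomial.C x := ⟨p.coeff 0,
            Polynomial.eq_C_of_natDegree_eq_zero h0⟩
          simp at he
        have hlt : p.eraseLead.natDegree < p.natDegree :=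
          lt_of_le_of_lt (Polynomial.eraseLead_natDegree_le p) (by omega)
        have hrec := ih p.eraseLead.natDegree (by omega) p.eraseLead he rfl
        have hvlt : v (algebraMap K[X] (RatFunc K)
            (Polynomial.monomial p.natDegree p.leadingCoeff)) <
            v (algebraMap K[X] (RatFunc K) p.eraseLead) := by
          rw [hmon, hrec, WithTop.coe_lt_coe]
          have : (p.eraseLead.natDegree : ℤ) < (p.natDegree : ℤ) := by exact_mod_cast hlt
          nlinarith
        conv_lhs => rw [← Polynomial.eraseLead_add_monomial_natDegree_leadingCoeff p]
        rw [map_add, v.map_add_eq_of_lt_right hvlt]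
        exact hmon
  exact H p.natDegree p hp rfl

/-- case A: every nonzero rational function has valuation a multiple of `c = v X`. -/
lemma vgroup_A {c : ℤ} (hX : v RatFunc.X = (c : WithTop ℤ)) (hc : c < 0)
    {f : RatFunc K} (hf : f ≠ 0) : ∃ k : ℤ, v f = ((k * c : ℤ) : WithTop ℤ) := by
  have hnum : f.num ≠ 0 := RatFunc.num_ne_zero hf
  have hden : f.denom ≠ 0 := f.denom_ne_zero
  have h1 := vpoly_deg v hv hX hc hnum
  have h2 := vpoly_deg v hv hX hc hden
  refine ⟨(f.num.natDegree : ℤ) - f.denom.natDegree, ?_⟩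
  have hfd := RatFunc.num_div_denom f
  conv_lhs => rw [← hfd]
  rw [v.map_div, h1, h2, sub_eq_add_neg, ← WithTop.LinearOrderedAddCommGroup.coe_neg,
    ← WithTop.coe_add]
  congr 1
  ring

/-- Case B structure lemma. -/
lemma vgroup_B (hx : 0 ≤ v RatFunc.X) {q₀ : K[X]} (hq₀ : q₀ ≠ 0)
    (hq₀v : 0 < v (algebraMap K[X] (RatFunc K) q₀)) :
    ∃ (g : ℤ) (π : K[X]), 0 < g ∧ Prime π ∧ π ∣ q₀ ∧
      v (algebraMap K[X] (RatFunc K) π) = (g : WithTop ℤ) ∧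
      (∀ p : K[X], ¬ π ∣ p → v (algebraMap K[X] (RatFunc K) p) = 0) ∧
      (∀ f : RatFunc K, f ≠ 0 → ∃ k : ℤ, v f = ((k * g : ℤ) : WithTop ℤ)) := by
  have hinj : Function.Injective (algebraMap K[X] (RatFunc K)) :=
    IsFractionRing.injective _ _
  have hpolynn : ∀ p : K[X], 0 ≤ v (algebraMap K[X] (RatFunc K) p) := vpoly_nonneg v hv hx
  set I : Ideal K[X] :=
    { carrier := {p | 0 < v (algebraMap K[X] (RatFunc K) p)}
      add_mem' := fun {p} {q} hp hq => by
        have := v.map_add (algebraMap K[X] (RatFunc K) p) (algebraMap K[X] (RatFunc K) q)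
        rw [← map_add] at this
        exact lt_of_lt_of_le (lt_min hp hq) this
      zero_mem' := by simp [v.map_zero]
      smul_mem' := fun c p hp => by
        simp only [smul_eq_mul, Set.mem_setOf_eq, map_mul, v.map_mul]
        calc (0 : WithTop ℤ) < v (algebraMap K[X] (RatFunc K) p) := hp
        _ = 0 + v (algebraMap K[X] (RatFunc K) p) := (zero_add _).symm
        _ ≤ _ := add_le_add_left (hpolynn c) _ } with hI
  have hmemI : ∀ p : K[X], p ∈ I ↔ 0 < v (algebraMap K[X] (RatFunc K) p) := fun p => Iff.rfl
  have hInebot : I ≠ ⊥ := fun h => hq₀ <| by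
    have : q₀ ∈ I := (hmemI q₀).mpr hq₀v
    rw [h] at this
    exact (Submodule.mem_bot _).mp this
  haveI hIprime : I.IsPrime := by
    constructor
    · rw [Ideal.ne_top_iff_one]
      intro h1
      have := (hmemI 1).mp h1
      rw [map_one, v.map_one] at this
      exact lt_irrefl _ this
    · intro p q hpq
      by_contra hcon
      push_neg at hcon
      obtain ⟨hp, hq⟩ := hcon
      have hple : v (algebraMap K[X] (RatFunc K) p) ≤ 0 := not_lt.mp (fun h => hp ((hmemI p).mpr h))
      have hqle : v (algebraMap K[X] (RatFunc K) q) ≤ 0 := not_lt.mp (fun h => hq ((hmemI q).mpr h))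
      have := (hmemI _).mp hpq
      rw [map_mul, v.map_mul] at this
      exact absurd this (not_lt.mpr (add_nonpos hple hqle))
  haveI : I.IsPrincipal := IsPrincipalIdealRing.principal I
  set π : K[X] := Submodule.IsPrincipal.generator I with hπ
  have hπprime : Prime π := Submodule.IsPrincipal.prime_generator_of_isPrime I hInebot
  have hdvd_iff : ∀ p : K[X], π ∣ p ↔ p ∈ I := by
    intro p
    rw [← Ideal.span_singleton_generator I, Ideal.mem_span_singleton]
  have hπmem : π ∈ I := Submodule.IsPrincipal.generator_mem I
  have hπpos : 0 < v (algebraMap K[X] (RatFunc K) π) := (hmemI π).mp hπmem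
  have hπne : algebraMap K[X] (RatFunc K) π ≠ 0 := by
    intro h
    exact hπprime.ne_zero (hinj (by simp [h]))
  obtain ⟨g, hg⟩ := exists_int' v hπne
  have hgpos : 0 < g := by
    rw [hg] at hπpos
    exact_mod_cast hπpos
  have hv0 : ∀ p : K[X], ¬ π ∣ p → v (algebraMap K[X] (RatFunc K) p) = 0 := by
    intro p hp
    refine le_antisymm ?_ (hpolynn p)
    by_contra hlt
    exact hp ((hdvd_iff p).mpr ((hmemI p).mpr (lt_of_not_ge hlt)))
  have hπdeg : π.natDegree ≠ 0 := by
    intro h0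
    have hC : π = Polynomial.C (π.coeff 0) := Polynomial.eq_C_of_natDegree_eq_zero h0
    have hc0 : π.coeff 0 ≠ 0 := by
      intro h
      exact hπprime.ne_zero (by rw [hC, h, Polynomial.C_0])
    exact hπprime.not_unit (hC ▸ Polynomial.isUnit_C.mpr (isUnit_iff_ne_zero.mpr hc0))
  have hpolyval : ∀ n : ℕ, ∀ p : K[X], p ≠ 0 → p.natDegree = n →
      ∃ k : ℤ, 0 ≤ k ∧ v (algebraMap K[X] (RatFunc K) p) = ((k * g : ℤ) : WithTop ℤ) := by
    intro n
    induction n using Nat.strong_induction_on with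
    | _ n ih =>
      intro p hp hn
      by_cases hdvd : π ∣ p
      · obtain ⟨q, rfl⟩ := hdvd
        have hq : q ≠ 0 := fun h => hp (by rw [h, mul_zero])
        have hdeg : q.natDegree < n := by
          rw [← hn, Polynomial.natDegree_mul (hπprime.ne_zero) hq]
          omega
        obtain ⟨k, hk0, hk⟩ := ih q.natDegree hdeg q hq rfl
        refine ⟨k + 1, by omega, ?_⟩
        rw [map_mul, v.map_mul, hg, hk, ← WithTop.coe_add]
        congr 1
        ring
      · exact ⟨0, le_refl _, by rw [hv0 p hdvd]; norm_num⟩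
  refine ⟨g, π, hgpos, hπprime, (hdvd_iff q₀).mpr ((hmemI q₀).mpr hq₀v), hg, hv0, ?_⟩
  intro f hf
  have hnum : f.num ≠ 0 := RatFunc.num_ne_zero hf
  obtain ⟨k₁, _, h1⟩ := hpolyval f.num.natDegree f.num hnum rfl
  obtain ⟨k₂, _, h2⟩ := hpolyval f.denom.natDegree f.denom f.denom_ne_zero rfl
  refine ⟨k₁ - k₂, ?_⟩
  have hfd := RatFunc.num_div_denom f
  conv_lhs => rw [← hfd]
  rw [v.map_div, h1, h2, sub_eq_add_neg, ← WithTop.LinearOrderedAddCommGroup.coe_neg,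
    ← WithTop.coe_add]
  congr 1
  ring

end RatFuncLemmas

end TPIaux

set_option maxHeartbeats 4000000

open Classical in
/-- **Lemma 7.6 (integrality part).** Let `K` be a field of characteristic `p ≠ 2` (and if
`p = 3` assume `j = 0`), let `Ẽ : y² = x³ + ax + b` be an elliptic curve over `K` with
`j`-invariant `j`, let `r = t³ + at + b ∈ K(t)`, and consider the sextic twist
`E : y² = x³ + r²a x + r³b` over `K(t)`. Then `P = (rt, r²)` is a point on `E`, and `P` and `2P`
are everywhere integral, so `D_P = D_{2P} = 0` (no place appears in these terms). -/
theorem twist_point_integral {K : Type*} [Field K] (hchar : ringChar K ≠ 2)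
    (a b j : K) (W₀ : WeierstrassCurve K) [W₀.IsElliptic]
    (hW₀ : W₀ = { a₁ := 0, a₂ := 0, a₃ := 0, a₄ := a, a₆ := b })
    (hj : W₀.j = j) (hj3 : ringChar K = 3 → j = 0)
    (r : RatFunc K)
    (hr : r = RatFunc.X ^ 3 + RatFunc.C a * RatFunc.X + RatFunc.C b)
    (W : WeierstrassCurve (RatFunc K))
    (hW : W = { a₁ := 0, a₂ := 0, a₃ := 0, a₄ := r ^ 2 * RatFunc.C a,
                a₆ := r ^ 3 * RatFunc.C b }) :
    W.toAffine.Equation (r * RatFunc.X) (r ^ 2) ∧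
    ∀ (h : W.toAffine.Nonsingular (r * RatFunc.X) (r ^ 2))
      (v : AddValuation (RatFunc K) (WithTop ℤ)),
      (∀ c : K, c ≠ 0 → v (RatFunc.C c) = 0) → (∃ f : RatFunc K, f ≠ 0 ∧ v f ≠ 0) →
      HasEDSVal v W (1 • (Point.some _ _ h : W.toAffine.Point)) 0 ∧
      HasEDSVal v W (2 • (Point.some _ _ h : W.toAffine.Point)) 0 := by

  classical
  subst hW
  have hKinj : Function.Injective (algebraMap K (RatFunc K)) :=
    (algebraMap K (RatFunc K)).injective
  have hCinj : Function.Injective (RatFunc.C : K →+* RatFunc K) := (RatFunc.C : K →+* RatFunc K).injective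
  -- characteristic ≠ 2 facts
  have h2K : (2 : K) ≠ 0 := by
    intro h2
    have hd : ringChar K ∣ 2 := (CharP.cast_eq_zero_iff K (ringChar K) 2).mp (by exact_mod_cast h2)
    have h1 : ringChar K ≠ 1 := CharP.ringChar_ne_one
    rcases (Nat.dvd_prime Nat.prime_two).mp hd with h | h
    · exact h1 h
    · exact hchar h
  have h4K : (4 : K) ≠ 0 := by
    have : (4 : K) = 2 ^ 2 := by norm_num
    rw [this]; exact pow_ne_zero _ h2K
  have h16K : (16 : K) ≠ 0 := by
    have : (16 : K) = 2 ^ 4 := by norm_num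
    rw [this]; exact pow_ne_zero _ h2K
  -- discriminant facts
  have hΔ₀ne : W₀.Δ ≠ 0 := W₀.isUnit_Δ.ne_zero
  have hΔ₀val : W₀.Δ = -16 * (4 * a ^ 3 + 27 * b ^ 2) := by
    subst hW₀
    simp only [WeierstrassCurve.Δ, b₂, b₄, b₆, b₈]
    ring
  have hD : 4 * a ^ 3 + 27 * b ^ 2 ≠ 0 := by
    rw [hΔ₀val] at hΔ₀ne
    intro h
    exact hΔ₀ne (by rw [h, mul_zero])
  -- the polynomial r
  set rpoly : Polynomial K := Polynomial.X ^ 3 + Polynomial.C a * Polynomial.X + Polynomial.C b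
    with hrpoly
  have hrp : algebraMap (Polynomial K) (RatFunc K) rpoly = r := by
    rw [hr, hrpoly]
    simp only [map_add, map_mul, map_pow, RatFunc.algebraMap_X, RatFunc.algebraMap_C]
  have hrpne : rpoly ≠ 0 := by
    have hdeg : (Polynomial.C a * Polynomial.X + Polynomial.C b).degree <
        (Polynomial.X ^ 3 : Polynomial K).degree := by
      rw [Polynomial.degree_X_pow]
      refine lt_of_le_of_lt (Polynomial.degree_add_le _ _) (max_lt ?_ ?_)
      · exact lt_of_le_of_lt (Polynomial.degree_mul_le _ _)
          (by
            have h1 := Polynomial.degree_C_le (a := a)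
            have h2 := Polynomial.degree_X_le (R := K)
            calc (Polynomial.C a).degree + (Polynomial.X : Polynomial K).degree ≤ 0 + 1 :=
                  add_le_add h1 h2
            _ < 3 := by decide)
      · exact lt_of_le_of_lt Polynomial.degree_C_le (by decide)
    have hdeg3 : rpoly.degree = 3 := by
      rw [hrpoly, add_assoc, Polynomial.degree_add_eq_left_of_degree_lt hdeg,
        Polynomial.degree_X_pow]
      rfl
    intro h
    rw [h] at hdeg3
    simp at hdeg3
  have hrpdeg : rpoly.natDegree = 3 := by
    have hdeg : (Polynomial.C a * Polynomial.X + Polynomial.C b).degree <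
        (Polynomial.X ^ 3 : Polynomial K).degree := by
      rw [Polynomial.degree_X_pow]
      refine lt_of_le_of_lt (Polynomial.degree_add_le _ _) (max_lt ?_ ?_)
      · exact lt_of_le_of_lt (Polynomial.degree_mul_le _ _)
          (by
            have h1 := Polynomial.degree_C_le (a := a)
            have h2 := Polynomial.degree_X_le (R := K)
            calc (Polynomial.C a).degree + (Polynomial.X : Polynomial K).degree ≤ 0 + 1 :=
                  add_le_add h1 h2
            _ < 3 := by decide)
      · exact lt_of_le_of_lt Polynomial.degree_C_le (by decide)
    have hdeg3 : rpoly.degree = 3 := by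
      rw [hrpoly, add_assoc, Polynomial.degree_add_eq_left_of_degree_lt hdeg,
        Polynomial.degree_X_pow]
      rfl
    exact Polynomial.natDegree_eq_of_degree_eq_some hdeg3
  have hrne : r ≠ 0 := by
    rw [← hrp]
    exact fun h => hrpne ((map_eq_zero_iff _ (IsFractionRing.injective _ _)).mp h)
  -- some RatFunc constants
  have hC2 : (2 : RatFunc K) = RatFunc.C (2 : K) := (map_ofNat _ 2).symm
  have hC3 : (3 : RatFunc K) = RatFunc.C (3 : K) := (map_ofNat _ 3).symm
  have hC4 : (4 : RatFunc K) = RatFunc.C (4 : K) := (map_ofNat _ 4).symm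
  have hC6 : (6 : RatFunc K) = RatFunc.C (6 : K) := (map_ofNat _ 6).symm
  have h2R : (2 : RatFunc K) ≠ 0 := by
    rw [hC2]; exact fun h => h2K (hCinj (by rw [h, map_zero]))
  have hhalf : RatFunc.C ((2:K)⁻¹) * 2 = 1 := by
    rw [hC2, ← map_mul, inv_mul_cancel₀ h2K, map_one]
  set W : WeierstrassCurve (RatFunc K) :=
    { a₁ := 0, a₂ := 0, a₃ := 0, a₄ := r ^ 2 * RatFunc.C a, a₆ := r ^ 3 * RatFunc.C b } with hWdef
  -- the equation
  refine ⟨?_, ?_⟩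
  · rw [equation_iff]
    show (r^2)^2 + 0 * (r * RatFunc.X) * r^2 + 0 * r^2 = (r * RatFunc.X)^3
      + 0 * (r * RatFunc.X)^2 + r ^ 2 * RatFunc.C a * (r * RatFunc.X) + r ^ 3 * RatFunc.C b
    linear_combination (r ^ 3 : RatFunc K) * hr
  intro h v hv _
  -- basic valuation facts
  have hXne : RatFunc.X ≠ (0 : RatFunc K) := RatFunc.X_ne_zero
  have hv2 : v (2 : RatFunc K) = 0 := by rw [hC2]; exact hv 2 h2K
  have hv4 : v (4 : RatFunc K) = 0 := by rw [hC4]; exact hv 4 h4K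
  have hvhalf : v (RatFunc.C ((2:K)⁻¹)) = 0 := hv _ (inv_ne_zero h2K)
  -- the negated Y and doubling data
  have hyne : (r ^ 2 : RatFunc K) ≠ W.toAffine.negY (r * RatFunc.X) (r ^ 2) := by
    rw [negY]
    show (r ^ 2 : RatFunc K) ≠ -(r^2) - 0 * (r * RatFunc.X) - 0
    intro heq
    apply hrne
    have h2r : (2 : RatFunc K) * r ^ 2 = 0 := by linear_combination heq
    rcases mul_eq_zero.mp h2r with h' | h'
    · exact absurd h' h2R
    · exact pow_eq_zero_iff (n := 2) (by norm_num) |>.mp h'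
  set L : RatFunc K := W.toAffine.slope (r * RatFunc.X) (r * RatFunc.X) (r ^ 2) (r ^ 2) with hLdef
  have hns2 : W.toAffine.Nonsingular (W.toAffine.addX (r * RatFunc.X) (r * RatFunc.X) L)
      (W.toAffine.addY (r * RatFunc.X) (r * RatFunc.X) (r ^ 2) L) :=
    nonsingular_add h h (fun hxy => hyne hxy.right)
  have h2P : (2 • (Point.some _ _ h : W.toAffine.Point)) = Point.some _ _ hns2 := by
    rw [two_nsmul]
    exact Point.add_self_of_Y_ne hyne
  have h1P : (1 • (Point.some _ _ h : W.toAffine.Point)) = Point.some _ _ h := one_nsmul _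
  -- the slope and the x-coordinate of 2P
  have hL : L = RatFunc.C ((2:K)⁻¹) * (3 * RatFunc.X ^ 2 + RatFunc.C a) := by
    rw [hLdef, slope_of_Y_ne rfl hyne, negY]
    show (3 * (r * RatFunc.X) ^ 2 + 2 * 0 * (r * RatFunc.X) + r ^ 2 * RatFunc.C a - 0 * r ^ 2) /
        (r ^ 2 - (-(r^2) - 0 * (r * RatFunc.X) - 0)) = _
    have hden : (r ^ 2 : RatFunc K) - (-(r^2) - 0 * (r * RatFunc.X) - 0) = 2 * r^2 := by ring
    rw [hden, div_eq_iff (mul_ne_zero h2R (pow_ne_zero 2 hrne))]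
    linear_combination (-(r^2*(3*RatFunc.X^2+RatFunc.C a))) * hhalf
  have hxQ : W.toAffine.addX (r * RatFunc.X) (r * RatFunc.X) L =
      RatFunc.C ((2:K)⁻¹) ^ 2 * (3 * RatFunc.X ^ 2 + RatFunc.C a) ^ 2 - 2 * (r * RatFunc.X) := by
    rw [addX, hL]
    show (RatFunc.C ((2:K)⁻¹) * (3 * RatFunc.X ^ 2 + RatFunc.C a)) ^ 2
        + 0 * (RatFunc.C ((2:K)⁻¹) * (3 * RatFunc.X ^ 2 + RatFunc.C a)) - 0 -
        r * RatFunc.X - r * RatFunc.X = _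
    ring
  have hv3 : 0 ≤ v (3 : RatFunc K) := by rw [hC3]; exact TPIaux.vC_nonneg v hv 3
  -- invariants of W
  have hWb₂ : W.b₂ = 0 := by
    rw [b₂]
    show (0 : RatFunc K) ^ 2 + 4 * 0 = 0
    ring
  have hWb₄ : W.b₄ = 2 * r ^ 2 * RatFunc.C a := by
    rw [b₄]
    show 2 * (r ^ 2 * RatFunc.C a) + 0 * 0 = _
    ring
  have hWb₆ : W.b₆ = 4 * r ^ 3 * RatFunc.C b := by
    rw [b₆]
    show (0 : RatFunc K) ^ 2 + 4 * (r ^ 3 * RatFunc.C b) = _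
    ring
  have hWb₈ : W.b₈ = -(r ^ 2 * RatFunc.C a) ^ 2 := by
    rw [b₈]
    show (0:RatFunc K) ^ 2 * (r ^ 3 * RatFunc.C b) + 4 * 0 * (r ^ 3 * RatFunc.C b)
      - 0 * 0 * (r ^ 2 * RatFunc.C a) + 0 * 0 ^ 2 - (r ^ 2 * RatFunc.C a) ^ 2 = _
    ring
  have hWc₄ : W.c₄ = r ^ 2 * RatFunc.C (-48 * a) := by
    rw [c₄, hWb₂, hWb₄, map_mul, map_neg, map_ofNat]
    ring
  have hWc₆ : W.c₆ = r ^ 3 * RatFunc.C (-864 * b) := by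
    rw [c₆, hWb₂, hWb₄, hWb₆, map_mul, map_neg, map_ofNat]
    ring
  have hWΔ : W.Δ = r ^ 6 * RatFunc.C (-16 * (4 * a ^ 3 + 27 * b ^ 2)) := by
    rw [WeierstrassCurve.Δ, hWb₂, hWb₄, hWb₆, hWb₈]
    rw [map_mul, map_neg, map_ofNat, map_add, map_mul, map_mul, map_pow, map_pow, map_ofNat,
      map_ofNat]
    ring
  -- integrality of W (needs case hypotheses on v r), deferred to cases
  rcases le_or_gt 0 (v RatFunc.X) with hx | hx
  · -- CASE B : v X ≥ 0
    have hvr0 : 0 ≤ v r := by rw [← hrp]; exact TPIaux.vpoly_nonneg v hv hx rpoly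
    have hvxP : 0 ≤ v (r * RatFunc.X) := TPIaux.vmul v hvr0 hx
    have hvxQ : 0 ≤ v (RatFunc.C ((2:K)⁻¹) ^ 2 * (3 * RatFunc.X ^ 2 + RatFunc.C a) ^ 2
        - 2 * (r * RatFunc.X)) := by
      refine v.map_le_sub ?_ ?_
      · refine TPIaux.vmul v (TPIaux.vpow v (TPIaux.vC_nonneg v hv _) 2) (TPIaux.vpow v ?_ 2)
        exact v.map_le_add (TPIaux.vmul v hv3 (TPIaux.vpow v hx 2)) (TPIaux.vC_nonneg v hv a)
      · exact TPIaux.vmul v (le_of_eq hv2.symm) hvxP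
    have hWint : IsIntegralModel v W := by
      refine ⟨?_, ?_, ?_, ?_, ?_⟩
      · show (0 : WithTop ℤ) ≤ v 0
        rw [v.map_zero]; exact le_top
      · show (0 : WithTop ℤ) ≤ v 0
        rw [v.map_zero]; exact le_top
      · show (0 : WithTop ℤ) ≤ v 0
        rw [v.map_zero]; exact le_top
      · show (0 : WithTop ℤ) ≤ v (r ^ 2 * RatFunc.C a)
        exact TPIaux.vmul v (TPIaux.vpow v hvr0 2) (TPIaux.vC_nonneg v hv a)
      · show (0 : WithTop ℤ) ≤ v (r ^ 3 * RatFunc.C b)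
        exact TPIaux.vmul v (TPIaux.vpow v hvr0 3) (TPIaux.vC_nonneg v hv b)
    have hWmin : IsMinimalModel v W := by
      rcases eq_or_lt_of_le hvr0 with hr0 | hr0
      · -- v r = 0 : the discriminant already has valuation 0
        have hc16 : (-16 * (4 * a ^ 3 + 27 * b ^ 2) : K) ≠ 0 :=
          mul_ne_zero (neg_ne_zero.mpr h16K) hD
        have hΔval : v W.Δ = 0 := by
          rw [hWΔ, v.map_mul, v.map_pow, ← hr0, smul_zero, zero_add, hv _ hc16]
        exact ⟨hWint, fun C hC => by
          rw [hΔval]; exact (TPIaux.integral_invariants v hC).2.2.2.2⟩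
      · -- v r > 0
        have hrposp : 0 < v (algebraMap (Polynomial K) (RatFunc K) rpoly) := by rw [hrp]; exact hr0
        obtain ⟨g, π, hg, hπprime, hπdvd, hπval, hπv0, hgrp⟩ :=
          TPIaux.vgroup_B v hv hx hrpne hrposp
        -- r is squarefree, so v r = g exactly
        have hder : Polynomial.derivative rpoly = 3 * Polynomial.X ^ 2 + Polynomial.C a := by
          rw [hrpoly]
          simp only [Polynomial.derivative_add, Polynomial.derivative_mul,
            Polynomial.derivative_X_pow, Polynomial.derivative_C, Polynomial.derivative_X,
            zero_mul, mul_one, add_zero, zero_add]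
          norm_num
          try simp [map_ofNat]
        have hkey : (Polynomial.C (27*b) - Polynomial.C (18*a) * Polynomial.X) * rpoly +
            (Polynomial.C (6*a) * Polynomial.X ^ 2 - Polynomial.C (9*b) * Polynomial.X +
              Polynomial.C (4*a^2)) * (3 * Polynomial.X ^ 2 + Polynomial.C a) =
            Polynomial.C (4 * a ^ 3 + 27 * b ^ 2) := by
          rw [hrpoly]
          simp only [map_mul, map_add, map_pow, map_ofNat]
          ring
        have hsep : rpoly.Separable := by
          refine ⟨Polynomial.C ((4*a^3+27*b^2)⁻¹) *
              (Polynomial.C (27*b) - Polynomial.C (18*a) * Polynomial.X),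
            Polynomial.C ((4*a^3+27*b^2)⁻¹) *
              (Polynomial.C (6*a) * Polynomial.X ^ 2 - Polynomial.C (9*b) * Polynomial.X +
                Polynomial.C (4*a^2)), ?_⟩
          rw [hder, mul_assoc, mul_assoc, ← mul_add, hkey, ← map_mul, inv_mul_cancel₀ hD,
            map_one]
        have hsqf := hsep.squarefree
        obtain ⟨q, hqe⟩ := hπdvd
        have hπq : ¬ π ∣ q := by
          rintro ⟨s, hs⟩
          exact hπprime.not_unit (hsqf π ⟨s, by rw [hqe, hs]; ring⟩)
        have hvr : v r = (g : WithTop ℤ) := by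
          rw [← hrp, hqe, map_mul, v.map_mul, hπval, hπv0 q hπq, add_zero]
        refine TPIaux.minimal_of_u_bound v hWint ?_
        intro C hC
        have hkC : ∃ k : ℤ, v (C.u : RatFunc K) = ((k * g : ℤ) : WithTop ℤ) :=
          hgrp _ C.u.ne_zero
        by_cases h3 : (3 : K) = 0
        · -- char 3 : use b₄, noting a ≠ 0
          have ha : a ≠ 0 := by
            intro ha0
            apply hD
            have h27 : (27 : K) = 0 := by
              rw [show (27:K) = 3 ^ 3 by norm_num, h3]; ring
            rw [ha0, h27]; ring
          have h6R0 : (6 : RatFunc K) = 0 := by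
            rw [hC6, show (6:K) = 2 * 3 by norm_num, h3, mul_zero, map_zero]
          have hbound := (TPIaux.integral_invariants v hC).2.1
          rw [variableChange_b₄, hWb₂, h6R0, mul_zero, add_zero, zero_mul, add_zero] at hbound
          refine TPIaux.u_nonpos_aux v hg hkC (n := 4) (by norm_num) (e := 2 * g) ?_
            (by push_cast; linarith) hbound
          rw [hWb₄, v.map_mul, v.map_mul, hv2, hv a ha, TPIaux.vpow_eq v hvr 2, zero_add,
            add_zero]
          norm_cast
        · by_cases ha : a = 0
          · -- a = 0 : use c₆, noting b ≠ 0
            have hb : b ≠ 0 := by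
              intro hb0
              apply hD
              rw [ha, hb0]; ring
            have h864 : (-864 * b : K) ≠ 0 := by
              refine mul_ne_zero ?_ hb
              rw [show (-864 : K) = -(2^5 * 3^3) by norm_num, neg_ne_zero]
              exact mul_ne_zero (pow_ne_zero _ h2K) (pow_ne_zero _ h3)
            have hbound := (TPIaux.integral_invariants v hC).2.2.2.1
            rw [variableChange_c₆] at hbound
            refine TPIaux.u_nonpos_aux v hg hkC (n := 6) (by norm_num) (e := 3 * g) ?_
              (by push_cast; linarith) hbound
            rw [hWc₆, v.map_mul, TPIaux.vpow_eq v hvr 3, hv _ h864, add_zero]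
            norm_cast
          · -- a ≠ 0 : use c₄
            have h48 : (-48 * a : K) ≠ 0 := by
              refine mul_ne_zero ?_ ha
              rw [show (-48 : K) = -(2^4 * 3) by norm_num, neg_ne_zero]
              exact mul_ne_zero (pow_ne_zero _ h2K) h3
            have hbound := (TPIaux.integral_invariants v hC).2.2.1
            rw [variableChange_c₄] at hbound
            refine TPIaux.u_nonpos_aux v hg hkC (n := 4) (by norm_num) (e := 2 * g) ?_
              (by push_cast; linarith) hbound
            rw [hWc₄, v.map_mul, TPIaux.vpow_eq v hvr 2, hv _ h48, add_zero]
            norm_cast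
    -- produce the two HasEDSVal statements
    have hidu : (((1 : VariableChange (RatFunc K)).u⁻¹ : (RatFunc K)ˣ) : RatFunc K) = 1 := by
      rw [VariableChange.one_def]
      simp
    constructor
    · refine ⟨1, r * RatFunc.X, r ^ 2, h, h1P, ?_, ?_⟩
      · rw [one_smul]; exact hWmin
      · have hval : (((1 : VariableChange (RatFunc K)).u⁻¹ : (RatFunc K)ˣ) : RatFunc K) ^ 2 *
            (r * RatFunc.X - (1 : VariableChange (RatFunc K)).r) = r * RatFunc.X := by
          rw [hidu, show (1 : VariableChange (RatFunc K)).r = 0 from rfl,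
            sub_zero, one_pow, one_mul]
        rw [hval]
        rw [show ((-(2 * ((0:ℕ) : ℤ)) : ℤ) : WithTop ℤ) = 0 by norm_num]
        exact (min_eq_right hvxP).symm
    · refine ⟨1, _, _, hns2, h2P, ?_, ?_⟩
      · rw [one_smul]; exact hWmin
      · have hval : (((1 : VariableChange (RatFunc K)).u⁻¹ : (RatFunc K)ˣ) : RatFunc K) ^ 2 *
            (W.toAffine.addX (r * RatFunc.X) (r * RatFunc.X) L - (1 : VariableChange (RatFunc K)).r) =
            RatFunc.C ((2:K)⁻¹) ^ 2 * (3 * RatFunc.X ^ 2 + RatFunc.C a) ^ 2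
              - 2 * (r * RatFunc.X) := by
          rw [hidu, show (1 : VariableChange (RatFunc K)).r = 0 from rfl,
            sub_zero, one_pow, one_mul, hxQ]
        rw [hval]
        rw [show ((-(2 * ((0:ℕ) : ℤ)) : ℤ) : WithTop ℤ) = 0 by norm_num]
        exact (min_eq_right hvxQ).symm
  · -- CASE A : v X < 0
    obtain ⟨c, hc⟩ := TPIaux.exists_int' v hXne
    have hcneg : c < 0 := by rw [hc] at hx; exact_mod_cast hx
    have hX2ne : (RatFunc.X : RatFunc K) ^ 2 ≠ 0 := pow_ne_zero _ hXne
    set CA : VariableChange (RatFunc K) := ⟨Units.mk0 (RatFunc.X ^ 2) hX2ne, 0, 0, 0⟩ with hCA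
    have hvu : v ((CA.u : (RatFunc K)ˣ) : RatFunc K) = ((2 * c : ℤ) : WithTop ℤ) := by
      show v (RatFunc.X ^ 2) = _
      rw [TPIaux.vpow_eq v hc 2]
      norm_cast
    have hvuinv : v ((CA.u⁻¹ : (RatFunc K)ˣ) : RatFunc K) = ((-(2 * c) : ℤ) : WithTop ℤ) := by
      rw [Units.val_inv_eq_inv_val]
      exact TPIaux.vinv_eq v hvu
    have hvr : v r = ((3 * c : ℤ) : WithTop ℤ) := by
      rw [← hrp, TPIaux.vpoly_deg v hv hc hcneg hrpne, hrpdeg]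
      norm_cast
    -- value group
    have hgrp : ∀ f : RatFunc K, f ≠ 0 → ∃ k : ℤ, v f = ((k * (-c) : ℤ) : WithTop ℤ) := by
      intro f hf
      obtain ⟨k, hk⟩ := TPIaux.vgroup_A v hv hc hcneg hf
      exact ⟨-k, by rw [hk]; congr 1; ring⟩
    have hgpos : 0 < -c := by linarith
    -- coefficients of W' = CA • W
    have hW'a₁ : (CA • W).a₁ = 0 := by
      rw [variableChange_a₁]
      show ((CA.u⁻¹ : (RatFunc K)ˣ) : RatFunc K) * (0 + 2 * 0) = 0
      ring
    have hW'a₂ : (CA • W).a₂ = 0 := by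
      rw [variableChange_a₂]
      show ((CA.u⁻¹ : (RatFunc K)ˣ) : RatFunc K) ^ 2 * (0 - 0 * 0 + 3 * 0 - 0 ^ 2) = 0
      ring
    have hW'a₃ : (CA • W).a₃ = 0 := by
      rw [variableChange_a₃]
      show ((CA.u⁻¹ : (RatFunc K)ˣ) : RatFunc K) ^ 3 * (0 + 0 * 0 + 2 * 0) = 0
      ring
    have hW'a₄ : (CA • W).a₄ =
        ((CA.u⁻¹ : (RatFunc K)ˣ) : RatFunc K) ^ 4 * (r ^ 2 * RatFunc.C a) := by
      rw [variableChange_a₄]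
      show ((CA.u⁻¹ : (RatFunc K)ˣ) : RatFunc K) ^ 4 *
        (r ^ 2 * RatFunc.C a - 0 * 0 + 2 * 0 * 0 - (0 + 0 * 0) * 0 + 3 * 0 ^ 2 - 2 * 0 * 0) = _
      ring
    have hW'a₆ : (CA • W).a₆ =
        ((CA.u⁻¹ : (RatFunc K)ˣ) : RatFunc K) ^ 6 * (r ^ 3 * RatFunc.C b) := by
      rw [variableChange_a₆]
      show ((CA.u⁻¹ : (RatFunc K)ˣ) : RatFunc K) ^ 6 *
        (r ^ 3 * RatFunc.C b + 0 * (r ^ 2 * RatFunc.C a) + 0 ^ 2 * 0 + 0 ^ 3 - 0 * 0 - 0 ^ 2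
          - 0 * 0 * 0) = _
      ring
    -- integrality of W'
    have hint' : IsIntegralModel v (CA • W) := by
      refine ⟨?_, ?_, ?_, ?_, ?_⟩
      · rw [hW'a₁, v.map_zero]; exact le_top
      · rw [hW'a₂, v.map_zero]; exact le_top
      · rw [hW'a₃, v.map_zero]; exact le_top
      · rw [hW'a₄, v.map_mul, TPIaux.vpow_eq v hvuinv 4, v.map_mul, TPIaux.vpow_eq v hvr 2]
        calc (0 : WithTop ℤ) ≤ (((4 : ℕ) * -(2*c) + (2 : ℕ) * (3*c) : ℤ) : WithTop ℤ) + 0 := by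
              rw [add_zero]
              exact_mod_cast (by push_cast; linarith : (0:ℤ) ≤ (4:ℕ) * -(2*c) + (2:ℕ) * (3*c))
        _ ≤ _ := by
              rw [WithTop.coe_add, add_assoc]
              exact add_le_add le_rfl (add_le_add le_rfl (TPIaux.vC_nonneg v hv a))
      · rw [hW'a₆, v.map_mul, TPIaux.vpow_eq v hvuinv 6, v.map_mul, TPIaux.vpow_eq v hvr 3]
        calc (0 : WithTop ℤ) ≤ (((6 : ℕ) * -(2*c) + (3 : ℕ) * (3*c) : ℤ) : WithTop ℤ) + 0 := by
              rw [add_zero]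
              exact_mod_cast (by push_cast; linarith : (0:ℤ) ≤ (6:ℕ) * -(2*c) + (3:ℕ) * (3*c))
        _ ≤ _ := by
              rw [WithTop.coe_add, add_assoc]
              exact add_le_add le_rfl (add_le_add le_rfl (TPIaux.vC_nonneg v hv b))
    -- minimality of W'
    have hW'min : IsMinimalModel v (CA • W) := by
      refine TPIaux.minimal_of_u_bound v hint' ?_
      intro C hC
      have hkC : ∃ k : ℤ, v (C.u : RatFunc K) = ((k * (-c) : ℤ) : WithTop ℤ) :=
        hgrp _ C.u.ne_zero
      by_cases h3 : (3 : K) = 0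
      · -- char 3 : use b₄
        have ha : a ≠ 0 := by
          intro ha0
          apply hD
          have h27 : (27 : K) = 0 := by
            rw [show (27:K) = 3 ^ 3 by norm_num, h3]; ring
          rw [ha0, h27]; ring
        have h6R0 : (6 : RatFunc K) = 0 := by
          rw [hC6, show (6:K) = 2 * 3 by norm_num, h3, mul_zero, map_zero]
        have hW'b₂ : (CA • W).b₂ = 0 := by
          rw [variableChange_b₂, hWb₂]
          show ((CA.u⁻¹ : (RatFunc K)ˣ) : RatFunc K) ^ 2 * (0 + 12 * 0) = 0
          ring
        have hW'b₄ : (CA • W).b₄ =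
            ((CA.u⁻¹ : (RatFunc K)ˣ) : RatFunc K) ^ 4 * W.b₄ := by
          rw [variableChange_b₄]
          show ((CA.u⁻¹ : (RatFunc K)ˣ) : RatFunc K) ^ 4 * (W.b₄ + 0 * W.b₂ + 6 * 0 ^ 2) = _
          ring
        have hbound := (TPIaux.integral_invariants v hC).2.1
        rw [variableChange_b₄, hW'b₂, h6R0, mul_zero, add_zero, zero_mul, add_zero] at hbound
        refine TPIaux.u_nonpos_aux v hgpos hkC (n := 4) (by norm_num)
          (e := (4:ℕ) * -(2*c) + ((2:ℤ) * (3*c))) ?_ (by push_cast; linarith) hbound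
        rw [hW'b₄, v.map_mul, TPIaux.vpow_eq v hvuinv 4, hWb₄, v.map_mul, v.map_mul, hv2,
          hv a ha, TPIaux.vpow_eq v hvr 2, zero_add, add_zero, ← WithTop.coe_add]
        norm_cast
      · by_cases ha : a = 0
        · -- a = 0 : use c₆
          have hb : b ≠ 0 := by
            intro hb0
            apply hD
            rw [ha, hb0]; ring
          have h864 : (-864 * b : K) ≠ 0 := by
            refine mul_ne_zero ?_ hb
            rw [show (-864 : K) = -(2^5 * 3^3) by norm_num, neg_ne_zero]
            exact mul_ne_zero (pow_ne_zero _ h2K) (pow_ne_zero _ h3)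
          have hW'c₆ : (CA • W).c₆ =
              ((CA.u⁻¹ : (RatFunc K)ˣ) : RatFunc K) ^ 6 * W.c₆ := variableChange_c₆ W CA
          have hbound := (TPIaux.integral_invariants v hC).2.2.2.1
          rw [variableChange_c₆] at hbound
          refine TPIaux.u_nonpos_aux v hgpos hkC (n := 6) (by norm_num)
            (e := (6:ℕ) * -(2*c) + ((3:ℤ) * (3*c))) ?_ (by push_cast; linarith) hbound
          rw [hW'c₆, v.map_mul, TPIaux.vpow_eq v hvuinv 6, hWc₆, v.map_mul,
            TPIaux.vpow_eq v hvr 3, hv _ h864, add_zero, ← WithTop.coe_add]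
          norm_cast
        · -- a ≠ 0 : use c₄
          have h48 : (-48 * a : K) ≠ 0 := by
            refine mul_ne_zero ?_ ha
            rw [show (-48 : K) = -(2^4 * 3) by norm_num, neg_ne_zero]
            exact mul_ne_zero (pow_ne_zero _ h2K) h3
          have hW'c₄ : (CA • W).c₄ =
              ((CA.u⁻¹ : (RatFunc K)ˣ) : RatFunc K) ^ 4 * W.c₄ := variableChange_c₄ W CA
          have hbound := (TPIaux.integral_invariants v hC).2.2.1
          rw [variableChange_c₄] at hbound
          refine TPIaux.u_nonpos_aux v hgpos hkC (n := 4) (by norm_num)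
            (e := (4:ℕ) * -(2*c) + ((2:ℤ) * (3*c))) ?_ (by push_cast; linarith) hbound
          rw [hW'c₄, v.map_mul, TPIaux.vpow_eq v hvuinv 4, hWc₄, v.map_mul,
            TPIaux.vpow_eq v hvr 2, hv _ h48, add_zero, ← WithTop.coe_add]
          norm_cast
    -- the coordinate values
    have hCAr : (CA.r : RatFunc K) = 0 := rfl
    have hvxP' : 0 ≤ v (((CA.u⁻¹ : (RatFunc K)ˣ) : RatFunc K) ^ 2 *
        (r * RatFunc.X - CA.r)) := by
      rw [hCAr, sub_zero, v.map_mul, TPIaux.vpow_eq v hvuinv 2, v.map_mul, hvr, hc,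
        ← WithTop.coe_add, ← WithTop.coe_add]
      exact_mod_cast (by push_cast; linarith : (0:ℤ) ≤ (2:ℕ) * -(2*c) + (3*c + c))
    have h3XCa : ((2 * c : ℤ) : WithTop ℤ) ≤ v (3 * RatFunc.X ^ 2 + RatFunc.C a) := by
      refine v.map_le_add ?_ ?_
      · calc ((2*c : ℤ) : WithTop ℤ) = 0 + (((2:ℕ) * c : ℤ) : WithTop ℤ) := by
              rw [zero_add]; norm_cast
        _ ≤ v 3 + v (RatFunc.X ^ 2) := add_le_add hv3 (le_of_eq (TPIaux.vpow_eq v hc 2).symm)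
        _ = v (3 * RatFunc.X ^ 2) := (v.map_mul _ _).symm
      · exact le_trans (by exact_mod_cast (by linarith : (2*c : ℤ) ≤ 0))
          (TPIaux.vC_nonneg v hv a)
    have hb1 : ((4 * c : ℤ) : WithTop ℤ) ≤
        v (RatFunc.C ((2:K)⁻¹) ^ 2 * (3 * RatFunc.X ^ 2 + RatFunc.C a) ^ 2) := by
      rw [pow_two (3 * RatFunc.X ^ 2 + RatFunc.C a)]
      calc ((4*c : ℤ) : WithTop ℤ) = 0 + ((2*c + 2*c : ℤ) : WithTop ℤ) := by
            rw [zero_add]; congr 1; ring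
      _ ≤ v (RatFunc.C ((2:K)⁻¹) ^ 2) +
            v ((3 * RatFunc.X ^ 2 + RatFunc.C a) * (3 * RatFunc.X ^ 2 + RatFunc.C a)) :=
          add_le_add (TPIaux.vpow v (TPIaux.vC_nonneg v hv _) 2)
            (TPIaux.vmul_ge v h3XCa h3XCa)
      _ = _ := (v.map_mul _ _).symm
    have hb2 : ((4 * c : ℤ) : WithTop ℤ) ≤ v (2 * (r * RatFunc.X)) := by
      rw [v.map_mul, hv2, zero_add, v.map_mul, hvr, hc, ← WithTop.coe_add]
      exact_mod_cast (by linarith : (4*c : ℤ) ≤ 3*c + c)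
    have hxQb : ((4 * c : ℤ) : WithTop ℤ) ≤
        v (RatFunc.C ((2:K)⁻¹) ^ 2 * (3 * RatFunc.X ^ 2 + RatFunc.C a) ^ 2
          - 2 * (r * RatFunc.X)) := v.map_le_sub hb1 hb2
    have hvxQ' : 0 ≤ v (((CA.u⁻¹ : (RatFunc K)ˣ) : RatFunc K) ^ 2 *
        (W.toAffine.addX (r * RatFunc.X) (r * RatFunc.X) L - CA.r)) := by
      rw [hCAr, sub_zero, hxQ, v.map_mul, TPIaux.vpow_eq v hvuinv 2]
      calc (0 : WithTop ℤ) ≤ (((2:ℕ) * -(2*c) + 4*c : ℤ) : WithTop ℤ) := by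
            exact_mod_cast (by push_cast; linarith : (0:ℤ) ≤ (2:ℕ) * -(2*c) + 4*c)
      _ = (((2:ℕ) * -(2*c) : ℤ) : WithTop ℤ) + ((4*c : ℤ) : WithTop ℤ) := WithTop.coe_add _ _
      _ ≤ _ := add_le_add le_rfl hxQb
    constructor
    · refine ⟨CA, r * RatFunc.X, r ^ 2, h, h1P, hW'min, ?_⟩
      rw [show ((-(2 * ((0:ℕ) : ℤ)) : ℤ) : WithTop ℤ) = 0 by norm_num]
      exact (min_eq_right hvxP').symm
    · refine ⟨CA, _, _, hns2, h2P, hW'min, ?_⟩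
      rw [show ((-(2 * ((0:ℕ) : ℤ)) : ℤ) : WithTop ℤ) = 0 by norm_num]
      exact (min_eq_right hvxQ').symm
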